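/- The sylvester congruence, defined as the transitive closure of the rewriting rule U a c V b W ≡ U c a V b W for letters a < b < c and words U,V,W, has the property that two permutations are equivalent if and only if they have the same image under the binary search tree map bt. -/

import Mathlib

open Equiv

/-- Binary trees with internal nodes labeled by natural numbers. -/
inductive LTree : Type
  | leaf : LTree
  | node : LTree → ℕ → LTree → LTree
  deriving DecidableEq

namespace LTree

/-- Binary search tree insertion. -/
def insert (x : ℕ) : LTree → LTree
  | leaf => node leaf x leaf
  | node l v r => if x < v then node (insert x l) v r else node l v (insert x r)

/-- Binary search tree built from a word by inserting its letters from right to left. -/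
def ofWord (w : List ℕ) : LTree := w.foldr insert leaf

end LTree

/-- One step of the sylvester rewriting rule:
`U a c V b W ≡ U c a V b W` for letters `a < b < c` and words `U, V, W`. -/
def SylvRel (w w' : List ℕ) : Prop :=
  ∃ (U V W : List ℕ) (a b c : ℕ), a < b ∧ b < c ∧
    w = U ++ a :: c :: V ++ b :: W ∧ w' = U ++ c :: a :: V ++ b :: W

/-- The one-line notation of a permutation of `Fin n`, as a word on `ℕ`. -/
def word {n : ℕ} (σ : Perm (Fin n)) : List ℕ := List.ofFn fun i => (σ i : ℕ)

/-- The binary tree map `bt` (binary search tree insertion of `σ_n, …, σ_1`). -/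
def bt {n : ℕ} (σ : Perm (Fin n)) : LTree := LTree.ofWord (word σ)

namespace LTree

def Mem (x : ℕ) : LTree → Prop
  | leaf => False
  | node l v r => x = v ∨ Mem x l ∨ Mem x r

def All (p : ℕ → Prop) : LTree → Prop
  | leaf => True
  | node l v r => p v ∧ All p l ∧ All p r

def IsBST : LTree → Prop
  | leaf => True
  | node l v r => All (· < v) l ∧ All (fun x => ¬ x < v) r ∧ IsBST l ∧ IsBST r

theorem insert_node (x : ℕ) (l : LTree) (v : ℕ) (r : LTree) :
    insert x (node l v r) = if x < v then node (insert x l) v r else node l v (insert x r) := rfl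

theorem all_mem {p : ℕ → Prop} {b : ℕ} : ∀ {t : LTree}, All p t → Mem b t → p b
  | leaf, _, h => h.elim
  | node l v r, ⟨hv, hl, hr⟩, h => by
      rcases h with rfl | h | h
      · exact hv
      · exact all_mem hl h
      · exact all_mem hr h

theorem all_insert {p : ℕ → Prop} {x : ℕ} (hp : p x) :
    ∀ {t : LTree}, All p t → All p (insert x t)
  | leaf, _ => ⟨hp, trivial, trivial⟩
  | node l v r, ⟨hv, hl, hr⟩ => by
      unfold insert
      split
      · exact ⟨hv, all_insert hp hl, hr⟩
      · exact ⟨hv, hl, all_insert hp hr⟩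

theorem isBST_insert {x : ℕ} : ∀ {t : LTree}, IsBST t → IsBST (insert x t)
  | leaf, _ => ⟨trivial, trivial, trivial, trivial⟩
  | node l v r, ⟨hl, hr, bl, br⟩ => by
      unfold insert
      split
      · exact ⟨all_insert (p := fun y => y < v) ‹x < v› hl, hr, isBST_insert bl, br⟩
      · exact ⟨hl, all_insert (p := fun y => ¬ y < v) ‹¬ x < v› hr, bl, isBST_insert br⟩

theorem mem_insert_self (x : ℕ) : ∀ (t : LTree), Mem x (insert x t)
  | leaf => Or.inl rfl
  | node l v r => by
      unfold insert
      split
      · exact Or.inr (Or.inl (mem_insert_self x l))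
      · exact Or.inr (Or.inr (mem_insert_self x r))

theorem mem_insert {b x : ℕ} : ∀ {t : LTree}, Mem b t → Mem b (insert x t)
  | leaf, h => h.elim
  | node l v r, h => by
      unfold insert
      rcases h with rfl | h | h <;> split
      · exact Or.inl rfl
      · exact Or.inl rfl
      · exact Or.inr (Or.inl (mem_insert h))
      · exact Or.inr (Or.inl h)
      · exact Or.inr (Or.inr h)
      · exact Or.inr (Or.inr (mem_insert h))

theorem insert_comm {a b c : ℕ} (hab : a < b) (hbc : b < c) :
    ∀ {t : LTree}, IsBST t → Mem b t → insert a (insert c t) = insert c (insert a t)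
  | leaf, _, h => h.elim
  | node l v r, ⟨hl, hr, bl, br⟩, hm => by
      by_cases hav : a < v
      · by_cases hcv : c < v
        · have hbl : Mem b l := by
            rcases hm with rfl | h | h
            · exact absurd (hbc.trans hcv) (lt_irrefl _)
            · exact h
            · exact absurd (hbc.trans hcv) (all_mem hr h)
          simp only [insert_node, if_pos hav, if_pos hcv]
          rw [insert_comm hab hbc bl hbl]
        · simp only [insert_node, if_pos hav, if_neg hcv]
      · have hcv : ¬ c < v := fun h => hav ((hab.trans hbc).trans h)
        have hbr : Mem b r := by
          rcases hm with rfl | h | h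
          · exact absurd hab hav
          · exact absurd (hab.trans (all_mem (p := fun y => y < v) hl h)) hav
          · exact h
        simp only [insert_node, if_neg hav, if_neg hcv]
        rw [insert_comm hab hbc br hbr]

theorem ofWord_append (u v : List ℕ) : ofWord (u ++ v) = u.foldr insert (ofWord v) := by
  simp [ofWord, List.foldr_append]

theorem ofWord_cons (x : ℕ) (w : List ℕ) : ofWord (x :: w) = insert x (ofWord w) := rfl

theorem isBST_ofWord (w : List ℕ) : IsBST (ofWord w) := by
  induction w with
  | nil => trivial
  | cons x w ih => exact isBST_insert ih

theorem mem_foldr {b : ℕ} {t : LTree} (h : Mem b t) :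
    ∀ (u : List ℕ), Mem b (u.foldr insert t)
  | [] => h
  | x :: u => mem_insert (mem_foldr h u)

end LTree

open LTree

theorem sylvRel_ofWord {w w' : List ℕ} (h : SylvRel w w') : ofWord w = ofWord w' := by
  obtain ⟨U, V, W, a, b, c, hab, hbc, rfl, rfl⟩ := h
  have hmem : Mem b (ofWord (V ++ b :: W)) := by
    rw [ofWord_append]
    exact mem_foldr (mem_insert_self b (ofWord W)) V
  have key : insert a (insert c (V.foldr insert (ofWord (b :: W))))
      = insert c (insert a (V.foldr insert (ofWord (b :: W)))) := by
    have := insert_comm hab hbc (isBST_ofWord (V ++ b :: W)) hmem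
    rwa [ofWord_append] at this
  simp only [ofWord_append, List.foldr_cons, List.foldr_append]
  rw [key]

theorem sylvRel_context {w w' : List ℕ} (p s : List ℕ) (h : SylvRel w w') :
    SylvRel (p ++ w ++ s) (p ++ w' ++ s) := by
  obtain ⟨U, V, W, a, b, c, hab, hbc, rfl, rfl⟩ := h
  exact ⟨p ++ U, V, W ++ s, a, b, c, hab, hbc, by simp, by simp⟩

theorem eqvGen_context {w w' : List ℕ} (p s : List ℕ)
    (h : Relation.EqvGen SylvRel w w') :
    Relation.EqvGen SylvRel (p ++ w ++ s) (p ++ w' ++ s) := by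
  induction h with
  | rel x y h => exact Relation.EqvGen.rel _ _ (sylvRel_context p s h)
  | refl x => exact Relation.EqvGen.refl _
  | symm x y _ ih => exact Relation.EqvGen.symm _ _ ih
  | trans x y z _ _ ih1 ih2 => exact Relation.EqvGen.trans _ _ _ ih1 ih2

theorem move {r c : ℕ} (hrc : r < c) :
    ∀ (p : List ℕ), (∀ a ∈ p, a < r) → ∀ (V W : List ℕ),
      Relation.EqvGen SylvRel (c :: (p ++ V) ++ r :: W) (p ++ c :: V ++ r :: W)
  | [], _, V, W => by exact Relation.EqvGen.refl _
  | a :: p, hp, V, W => by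
    have ha : a < r := hp a (by simp)
    have step : SylvRel (a :: c :: (p ++ V) ++ r :: W) (c :: a :: (p ++ V) ++ r :: W) :=
      ⟨[], p ++ V, W, a, r, c, ha, hrc, by simp, by simp⟩
    have ih := move hrc p (fun x hx => hp x (by simp [hx])) V W
    have ih' := eqvGen_context [a] [] ih
    simp only [List.append_nil] at ih'
    exact Relation.EqvGen.trans _ _ _
      (Relation.EqvGen.symm _ _ (Relation.EqvGen.rel _ _ step)) ih'

theorem sylv_sort (r : ℕ) :
    ∀ (u : List ℕ), (∀ x ∈ u, x ≠ r) →
      Relation.EqvGen SylvRel (u ++ [r])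
        (u.filter (fun x => x < r) ++ u.filter (fun x => ¬ x < r) ++ [r])
  | [], _ => by exact Relation.EqvGen.refl _
  | x :: u, hu => by
    have hx : x ≠ r := hu x (by simp)
    have ih := sylv_sort r u (fun y hy => hu y (by simp [hy]))
    have ih' := eqvGen_context [x] [] ih
    simp only [List.append_nil] at ih'
    by_cases hxr : x < r
    · have e1 : (x :: u).filter (fun x => x < r) = x :: u.filter (fun x => x < r) := by
        simp [List.filter_cons, hxr]
      have e2 : (x :: u).filter (fun x => ¬ x < r) = u.filter (fun x => ¬ x < r) := by
        simp [List.filter_cons, hxr]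
      rw [e1, e2]
      exact ih'
    · have hrx : r < x := lt_of_le_of_ne (not_lt.mp hxr) (Ne.symm hx)
      have e1 : (x :: u).filter (fun x => x < r) = u.filter (fun x => x < r) := by
        simp [List.filter_cons, hxr]
      have e2 : (x :: u).filter (fun x => ¬ x < r) = x :: u.filter (fun x => ¬ x < r) := by
        simp [List.filter_cons, hxr]
      rw [e1, e2]
      have hmove := move hrx (u.filter (fun x => x < r))
        (fun a ha => by simpa using (List.of_mem_filter ha))
        (u.filter (fun x => ¬ x < r)) []
      exact Relation.EqvGen.trans _ _ _ ih' hmove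

theorem foldr_insert_node (r : ℕ) :
    ∀ (u : List ℕ) (l t : LTree),
      u.foldr insert (node l r t) =
        node ((u.filter (fun x => x < r)).foldr insert l) r
          ((u.filter (fun x => ¬ x < r)).foldr insert t)
  | [], l, t => rfl
  | x :: u, l, t => by
    by_cases hxr : x < r
    · simp [List.filter_cons, hxr, foldr_insert_node r u l t, insert_node]
    · simp [List.filter_cons, hxr, not_lt.mp hxr, foldr_insert_node r u l t, insert_node]

theorem ofWord_concat (u : List ℕ) (r : ℕ) :
    ofWord (u ++ [r]) =
      node (ofWord (u.filter (fun x => x < r))) r (ofWord (u.filter (fun x => ¬ x < r))) := by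
  rw [ofWord_append]
  show u.foldr insert (node leaf r leaf) = _
  rw [foldr_insert_node]
  rfl

def canon : LTree → List ℕ
  | leaf => []
  | node l v r => canon l ++ canon r ++ [v]

theorem canon_eqv : ∀ (n : ℕ) (w : List ℕ), w.length ≤ n → w.Nodup →
    Relation.EqvGen SylvRel w (canon (ofWord w))
  | 0, w, hw, _ => by
    rw [List.length_eq_zero_iff.mp (Nat.le_zero.mp hw)]
    exact Relation.EqvGen.refl _
  | n + 1, w, hw, hnd => by
    rcases w.eq_nil_or_concat with rfl | ⟨u, r, rfl⟩
    · exact Relation.EqvGen.refl _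
    · rw [List.concat_eq_append] at hw hnd ⊢
      have hlen : u.length ≤ n := by simp at hw; omega
      rw [List.nodup_append] at hnd
      have hu : u.Nodup := hnd.1
      have hne : ∀ x ∈ u, x ≠ r := fun x hx hxr => hnd.2.2 x hx r (by simp) hxr
      have h1 := sylv_sort r u hne
      have ihf1 := canon_eqv n (u.filter (fun x => x < r))
        (le_trans (u.length_filter_le _) hlen) (hu.filter _)
      have ihf2 := canon_eqv n (u.filter (fun x => ¬ x < r))
        (le_trans (u.length_filter_le _) hlen) (hu.filter _)
      have h2 := eqvGen_context [] (u.filter (fun x => ¬ x < r) ++ [r]) ihf1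
      simp only [List.nil_append] at h2
      rw [← List.append_assoc, ← List.append_assoc] at h2
      have h3 := eqvGen_context (canon (ofWord (u.filter (fun x => x < r)))) [r] ihf2
      rw [ofWord_concat u r]
      simp only [canon]
      exact Relation.EqvGen.trans _ _ _ h1 (Relation.EqvGen.trans _ _ _ h2 h3)

theorem word_nodup {n : ℕ} (σ : Perm (Fin n)) : (word σ).Nodup := by
  rw [word, List.nodup_ofFn]
  exact Fin.val_injective.comp σ.injective

theorem eqvGen_ofWord {w w' : List ℕ} (h : Relation.EqvGen SylvRel w w') :
    ofWord w = ofWord w' := by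
  induction h with
  | rel x y h => exact sylvRel_ofWord h
  | refl x => rfl
  | symm x y _ ih => exact ih.symm
  | trans x y z _ _ ih1 ih2 => exact ih1.trans ih2

/-- Two permutations are equivalent for the sylvester congruence (the equivalence
generated by the rewriting rule `U a c V b W ≡ U c a V b W`, `a < b < c`) if and
only if they have the same image under the binary search tree map `bt`. -/
theorem sylvester_congruence_iff_same_bt (n : ℕ) (σ τ : Perm (Fin n)) :
    Relation.EqvGen SylvRel (word σ) (word τ) ↔ bt σ = bt τ := by
  constructor
  · exact eqvGen_ofWord
  · intro h
    have h1 := canon_eqv (word σ).length (word σ) le_rfl (word_nodup σ)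
    have h2 := canon_eqv (word τ).length (word τ) le_rfl (word_nodup τ)
    have hc : canon (ofWord (word σ)) = canon (ofWord (word τ)) := by
      rw [show ofWord (word σ) = bt σ from rfl, show ofWord (word τ) = bt τ from rfl, h]
    rw [hc] at h1
    exact Relation.EqvGen.trans _ _ _ h1 (Relation.EqvGen.symm _ _ h2)
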